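/- Let 𝒮 be a maximal nested collection with support S and let s ∉ S. Then the activation μ_s(𝒮) = 𝒮 ∪ {S ⊕ s} is a maximal nested collection with support S ∪ {s}. -/

import Mathlib

open MvPolynomial

/-- Reachability inside a subset `U` of vertices, along edges of `E`. -/
def ReachIn {n : ℕ} (E : Fin n → Fin n → Prop) (U : Finset (Fin n)) (a b : Fin n) : Prop :=
  Relation.ReflTransGen (fun x y => E x y ∧ x ∈ U ∧ y ∈ U) a b

/-- A nonempty subset `I` is strongly connected if any vertex of `I` can reach any
other vertex of `I` by a directed path staying inside `I`. -/
def StronglyConnected {n : ℕ} (E : Fin n → Fin n → Prop) (I : Finset (Fin n)) : Prop :=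
  I.Nonempty ∧ ∀ a ∈ I, ∀ b ∈ I, ReachIn E I a b

open Classical in
/-- The strongly connected component of `x` in the induced subgraph on `U`. -/
noncomputable def scc {n : ℕ} (E : Fin n → Fin n → Prop) (U : Finset (Fin n)) (x : Fin n) :
    Finset (Fin n) :=
  U.filter fun y => ReachIn E U x y ∧ ReachIn E U y x

/-- `S ⊕ j` : the strongly connected component of `S ∪ {j}` containing `j`. -/
noncomputable def oplus {n : ℕ} (E : Fin n → Fin n → Prop) (S : Finset (Fin n)) (j : Fin n) :
    Finset (Fin n) :=
  scc E (insert j S) j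

/-- `S ⊖ j = (S ∪ {j}) − (S ⊕ j)`. -/
noncomputable def ominus {n : ℕ} (E : Fin n → Fin n → Prop) (S : Finset (Fin n)) (j : Fin n) :
    Finset (Fin n) :=
  insert j S \ oplus E S j

/-- A family of strongly connected subsets is nested if any two members are nested or
disjoint, and any tuple of pairwise disjoint members are exactly the strongly connected
components of their union. -/
def Nested {n : ℕ} (E : Fin n → Fin n → Prop) (𝒮 : Finset (Finset (Fin n))) : Prop :=
  (∀ I ∈ 𝒮, StronglyConnected E I) ∧
  (∀ I ∈ 𝒮, ∀ J ∈ 𝒮, I ⊆ J ∨ J ⊆ I ∨ Disjoint I J) ∧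
  (∀ 𝒯 ⊆ 𝒮, (∀ I ∈ 𝒯, ∀ J ∈ 𝒯, I ≠ J → Disjoint I J) →
    ∀ I ∈ 𝒯, ∀ x ∈ I, scc E (𝒯.sup id) x = I)

/-- The support of a collection: the union of its members. -/
def nsupport {n : ℕ} (𝒮 : Finset (Finset (Fin n))) : Finset (Fin n) := 𝒮.sup id

/-- A nested collection is maximal (for its support) if the only nested collection with the
same support containing it is itself. -/
def MaximalNested {n : ℕ} (E : Fin n → Fin n → Prop) (𝒮 : Finset (Finset (Fin n))) : Prop :=
  Nested E 𝒮 ∧ ∀ 𝒮' : Finset (Finset (Fin n)),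
    Nested E 𝒮' → nsupport 𝒮' = nsupport 𝒮 → 𝒮 ⊆ 𝒮' → 𝒮' = 𝒮

/-
The new set `K = S ⊕ s` is a strongly connected component of the support `S ∪ {s}`, so every
strongly connected member of `𝒮` either lies inside `K` or misses it, and `K` never disturbs the
components of a disjoint union; hence `𝒮 ∪ {K}` is nested. For maximality, take a nested
`𝒮' ⊇ 𝒮 ∪ {K}` on the same support. Its members avoiding `s` form a nested collection on `S`
containing `𝒮`, hence equal to `𝒮`. A member `J ∋ s` is strongly connected, so `J ⊆ K`, and `K \ J`
is covered by members of `𝒮` disjoint from `J`. Taking the maximal ones among them together with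
`J` gives disjoint members of `𝒮'` with union `K`, so `J` is the component of `s` in `K`, i.e.
`J = K`.
-/

open Finset

section Components

variable {n : ℕ} {E : Fin n → Fin n → Prop} {I U V W : Finset (Fin n)} {x y a b : Fin n}

theorem ReachIn.mono (h : U ⊆ V) (hr : ReachIn E U a b) : ReachIn E V a b :=
  Relation.ReflTransGen.mono (p := fun x y => E x y ∧ x ∈ V ∧ y ∈ V)
    (fun _ _ hxy => ⟨hxy.1, h hxy.2.1, h hxy.2.2⟩) _ _ hr

theorem mem_scc : y ∈ scc E U x ↔ y ∈ U ∧ ReachIn E U x y ∧ ReachIn E U y x := by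
  classical
  simp only [scc, mem_filter]

theorem self_mem_scc (hx : x ∈ U) : x ∈ scc E U x := mem_scc.2 ⟨hx, .refl, .refl⟩

theorem scc_subset : scc E U x ⊆ U := fun _ hy => (mem_scc.1 hy).1

theorem scc_mono (h : U ⊆ V) : scc E U x ⊆ scc E V x := fun _ hy =>
  let ⟨hyU, hxy, hyx⟩ := mem_scc.1 hy
  mem_scc.2 ⟨h hyU, hxy.mono h, hyx.mono h⟩

theorem scc_eq_of_mem (hy : y ∈ scc E U x) : scc E U y = scc E U x := by
  obtain ⟨-, hxy, hyx⟩ := mem_scc.1 hy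
  ext z
  simp only [mem_scc]
  exact ⟨fun ⟨hz, hyz, hzy⟩ => ⟨hz, hxy.trans hyz, hzy.trans hyx⟩,
    fun ⟨hz, hxz, hzx⟩ => ⟨hz, hyx.trans hxz, hzx.trans hxy⟩⟩

theorem disjoint_scc_of_notMem (hy : y ∈ U) (h : y ∉ scc E U x) :
    Disjoint (scc E U y) (scc E U x) := by
  refine disjoint_left.2 fun z hzy hzx => h ?_
  rw [← (scc_eq_of_mem hzy).symm.trans (scc_eq_of_mem hzx)]
  exact self_mem_scc hy

theorem reachIn_scc (hxa : ReachIn E U x a) (hab : ReachIn E U a b) (hbx : ReachIn E U b x) :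
    ReachIn E (scc E U x) a b := by
  induction hab with
  | refl => exact .refl
  | @tail c d hac hcd ih =>
    have hcx : ReachIn E U c x := Relation.ReflTransGen.head hcd hbx
    have hxc : ReachIn E U x c := hxa.trans hac
    exact (ih hcx).tail ⟨hcd.1, mem_scc.2 ⟨hcd.2.1, hxc, hcx⟩,
      mem_scc.2 ⟨hcd.2.2, hxc.tail hcd, hbx⟩⟩

theorem stronglyConnected_scc (hx : x ∈ U) : StronglyConnected E (scc E U x) := by
  refine ⟨⟨x, self_mem_scc hx⟩, fun a ha b hb => ?_⟩
  rw [mem_scc] at ha hb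
  exact reachIn_scc ha.2.1 (ha.2.2.trans hb.2.1) hb.2.2

theorem scc_eq_of_scc_subset (hWU : W ⊆ U) (h : scc E U x ⊆ W) : scc E W x = scc E U x := by
  refine (scc_mono hWU).antisymm fun y hy => ?_
  obtain ⟨-, hxy, hyx⟩ := mem_scc.1 hy
  exact mem_scc.2 ⟨h hy, (reachIn_scc .refl hxy hyx).mono h, (reachIn_scc hxy hyx .refl).mono h⟩

theorem StronglyConnected.subset_scc (hI : StronglyConnected E I) (hIU : I ⊆ U) (hx : x ∈ I) :
    I ⊆ scc E U x :=
  fun y hy => mem_scc.2 ⟨hIU hy, (hI.2 x hx y hy).mono hIU, (hI.2 y hy x hx).mono hIU⟩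

theorem StronglyConnected.scc_eq (hI : StronglyConnected E I) (hx : x ∈ I) : scc E I x = I :=
  scc_subset.antisymm (hI.subset_scc subset_rfl hx)

theorem StronglyConnected.subset_scc_or_disjoint (hI : StronglyConnected E I) (hIU : I ⊆ U) :
    I ⊆ scc E U x ∨ Disjoint I (scc E U x) := by
  refine or_iff_not_imp_right.2 fun hIK => ?_
  obtain ⟨y, hyI, hyK⟩ := not_disjoint_iff.1 hIK
  exact scc_eq_of_mem hyK ▸ hI.subset_scc hIU hyI

end Components

theorem exists_pairwiseDisjoint_subfamily {α : Type*} [DecidableEq α] {𝒜 : Finset (Finset α)}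
    (h : ∀ I ∈ 𝒜, ∀ J ∈ 𝒜, I ⊆ J ∨ J ⊆ I ∨ Disjoint I J) :
    ∃ ℬ ⊆ 𝒜, (∀ I ∈ ℬ, ∀ J ∈ ℬ, I ≠ J → Disjoint I J) ∧ ℬ.sup id = 𝒜.sup id := by
  classical
  refine ⟨𝒜.filter (Maximal (· ∈ 𝒜)), filter_subset _ _, fun I hI J hJ hIJ => ?_, ?_⟩
  · obtain ⟨hI𝒜, hImax⟩ := (mem_filter.1 hI).2
    obtain ⟨hJ𝒜, hJmax⟩ := (mem_filter.1 hJ).2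
    rcases h I hI𝒜 J hJ𝒜 with hsub | hsub | hdisj
    · exact absurd (hsub.antisymm (hImax hJ𝒜 hsub)) hIJ
    · exact absurd ((hJmax hI𝒜 hsub).antisymm hsub) hIJ
    · exact hdisj
  · refine (sup_mono (filter_subset _ _)).antisymm fun x hx => ?_
    obtain ⟨I, hI, hxI⟩ := mem_sup.1 hx
    obtain ⟨M, hIM, hM⟩ := 𝒜.exists_le_maximal hI
    exact mem_sup.2 ⟨M, mem_filter.2 ⟨hM.1, hM⟩, hIM hxI⟩

section NestedCollections

variable {n : ℕ} {E : Fin n → Fin n → Prop} {𝒮 𝒮' 𝒯 : Finset (Finset (Fin n))}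
  {I J K V : Finset (Fin n)} {s x y : Fin n}

theorem mem_nsupport : x ∈ nsupport 𝒮 ↔ ∃ I ∈ 𝒮, x ∈ I := mem_sup

theorem subset_nsupport (hI : I ∈ 𝒮) : I ⊆ nsupport 𝒮 := le_sup (f := id) hI

theorem nsupport_mono (h : 𝒮 ⊆ 𝒮') : nsupport 𝒮 ⊆ nsupport 𝒮' := sup_mono h

theorem nsupport_insert : nsupport (insert I 𝒮) = I ∪ nsupport 𝒮 := sup_insert

theorem nsupport_insert_oplus (𝒮 : Finset (Finset (Fin n))) (s : Fin n) :
    nsupport (insert (oplus E (nsupport 𝒮) s) 𝒮) = insert s (nsupport 𝒮) := by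
  rw [nsupport_insert]
  refine (union_subset scc_subset (subset_insert _ _)).antisymm
    (insert_subset ?_ subset_union_right)
  exact mem_union_left _ (self_mem_scc (mem_insert_self _ _))

theorem Nested.subset (h : Nested E 𝒮) (h𝒯 : 𝒯 ⊆ 𝒮) : Nested E 𝒯 :=
  ⟨fun I hI => h.1 I (h𝒯 hI), fun I hI J hJ => h.2.1 I (h𝒯 hI) J (h𝒯 hJ),
    fun 𝒰 h𝒰 => h.2.2 𝒰 (h𝒰.trans h𝒯)⟩

theorem Nested.scc_sup_eq_of_subset_insert_scc (h : Nested E 𝒮) (hV : nsupport 𝒮 ⊆ V)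
    (h𝒯 : 𝒯 ⊆ insert (scc E V x) 𝒮) (hdisj : ∀ I ∈ 𝒯, ∀ J ∈ 𝒯, I ≠ J → Disjoint I J)
    (hI : I ∈ 𝒯) (hy : y ∈ I) : scc E (𝒯.sup id) y = I := by
  set K := scc E V x
  by_cases hK𝒯 : K ∈ 𝒯
  swap
  · exact h.2.2 𝒯 ((subset_insert_iff_of_notMem hK𝒯).1 h𝒯) hdisj I hI y hy
  have hUV : 𝒯.sup id ⊆ V := Finset.sup_le fun J hJ => by
    rcases mem_insert.1 (h𝒯 hJ) with rfl | hJ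
    exacts [scc_subset, (subset_nsupport hJ).trans hV]
  by_cases hIK : I = K
  · subst hIK
    have hKy : scc E V y = K := scc_eq_of_mem hy
    rw [← hKy]
    exact scc_eq_of_scc_subset hUV (hKy ▸ le_sup (f := id) hK𝒯)
  have hyK : y ∉ K := disjoint_left.1 (hdisj I hI K hK𝒯 hIK) hy
  -- the component of `y` misses `K`, so it already lives in the union of the other members
  have hsub : scc E (𝒯.sup id) y ⊆ (𝒯.erase K).sup id := fun z hz => by
    have hzK : z ∉ K := disjoint_left.1
      (disjoint_scc_of_notMem (hUV (le_sup (f := id) hI hy)) hyK) (scc_mono hUV hz)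
    have hzU := scc_subset hz
    rw [← insert_erase hK𝒯, sup_insert] at hzU
    exact (mem_union.1 hzU).resolve_left hzK
  have h𝒯𝒮 : 𝒯.erase K ⊆ 𝒮 := fun J hJ =>
    (mem_insert.1 (h𝒯 (mem_of_mem_erase hJ))).resolve_left (ne_of_mem_erase hJ)
  rw [← scc_eq_of_scc_subset (sup_mono (erase_subset K 𝒯)) hsub]
  exact h.2.2 _ h𝒯𝒮 (fun A hA B hB => hdisj A (mem_of_mem_erase hA) B (mem_of_mem_erase hB))
    I (mem_erase.2 ⟨hIK, hI⟩) y hy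

theorem Nested.insert_scc (h : Nested E 𝒮) (hV : nsupport 𝒮 ⊆ V) (hx : x ∈ V) :
    Nested E (insert (scc E V x) 𝒮) := by
  have subset_or_disjoint : ∀ I ∈ 𝒮, I ⊆ scc E V x ∨ Disjoint I (scc E V x) := fun I hI =>
    (h.1 I hI).subset_scc_or_disjoint ((subset_nsupport hI).trans hV)
  refine ⟨?_, ?_, fun 𝒯 h𝒯 hdisj _ hI _ hy =>
    h.scc_sup_eq_of_subset_insert_scc hV h𝒯 hdisj hI hy⟩
  · simpa only [forall_mem_insert] using ⟨stronglyConnected_scc hx, h.1⟩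
  · simp only [forall_mem_insert, subset_refl, true_or, true_and]
    exact ⟨fun J hJ => (subset_or_disjoint J hJ).elim (.inr ∘ .inl) fun hJK => .inr (.inr hJK.symm),
      fun I hI => ⟨(subset_or_disjoint I hI).elim .inl (.inr ∘ .inr), h.2.1 I hI⟩⟩

theorem Nested.eq_of_union_eq {𝒜 : Finset (Finset (Fin n))} (h : Nested E 𝒮) (h𝒜 : 𝒜 ⊆ 𝒮)
    (hJ : J ∈ 𝒮) (hdisj : ∀ I ∈ 𝒜, Disjoint I J) (hK : StronglyConnected E K)
    (hJK : J ∪ 𝒜.sup id = K) : J = K := by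
  obtain ⟨ℬ, hℬ𝒜, hℬdisj, hℬsup⟩ :=
    exists_pairwiseDisjoint_subfamily fun I hI J hJ => h.2.1 I (h𝒜 hI) J (h𝒜 hJ)
  obtain ⟨x, hx⟩ := (h.1 J hJ).1
  have hdisj' : ∀ A ∈ insert J ℬ, ∀ B ∈ insert J ℬ, A ≠ B → Disjoint A B := by
    intro A hA B hB hAB
    rcases mem_insert.1 hA with hA | hA <;> rcases mem_insert.1 hB with hB | hB
    · exact absurd (hA.trans hB.symm) hAB
    · exact hA ▸ (hdisj B (hℬ𝒜 hB)).symm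
    · exact hB ▸ hdisj A (hℬ𝒜 hA)
    · exact hℬdisj A hA B hB hAB
  have hcomp := h.2.2 (insert J ℬ) (insert_subset hJ (hℬ𝒜.trans h𝒜)) hdisj' J
    (mem_insert_self _ _) x hx
  rw [sup_insert, hℬsup, id, sup_eq_union, hJK] at hcomp
  rw [← hcomp, hK.scc_eq (hJK ▸ mem_union_left _ hx)]

theorem Nested.eq_of_mem_of_subset (h : Nested E 𝒮') (hsub : 𝒮 ⊆ 𝒮') (hs : s ∉ nsupport 𝒮)
    (hK : K ∈ 𝒮') (hKS : K ⊆ insert s (nsupport 𝒮)) (hJ : J ∈ 𝒮') (hsJ : s ∈ J) (hJK : J ⊆ K) :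
    J = K := by
  classical
  have hsI : ∀ I ∈ 𝒮, s ∉ I := fun I hI hsI => hs (subset_nsupport hI hsI)
  refine h.eq_of_union_eq (𝒜 := 𝒮.filter (· ⊆ K \ J)) ((filter_subset _ _).trans hsub) hJ
    (fun I hI => disjoint_of_subset_left (mem_filter.1 hI).2 sdiff_disjoint) (h.1 K hK) ?_
  refine (union_subset hJK (Finset.sup_le fun I hI => (mem_filter.1 hI).2.trans sdiff_subset))
    |>.antisymm fun v hvK => ?_
  by_cases hvJ : v ∈ J
  · exact mem_union_left _ hvJ
  have hvS : v ∈ nsupport 𝒮 :=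
    (mem_insert.1 (hKS hvK)).resolve_left fun hvs => hvJ (hvs ▸ hsJ)
  obtain ⟨I, hI, hvI⟩ := mem_nsupport.1 hvS
  have hIK : I ⊆ K := by
    rcases h.2.1 I (hsub hI) K hK with hIK | hKI | hIK
    exacts [hIK, absurd (hKI (hJK hsJ)) (hsI I hI), absurd hvK (disjoint_left.1 hIK hvI)]
  have hIJ : Disjoint I J := by
    rcases h.2.1 I (hsub hI) J hJ with hIJ | hJI | hIJ
    exacts [absurd (hIJ hvI) hvJ, absurd (hJI hsJ) (hsI I hI), hIJ]
  exact mem_union_right _ (mem_sup.2 ⟨I, mem_filter.2 ⟨hI, fun w hw =>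
    mem_sdiff.2 ⟨hIK hw, disjoint_left.1 hIJ hw⟩⟩, hvI⟩)

theorem MaximalNested.filter_notMem_eq (h𝒮 : MaximalNested E 𝒮) (hs : s ∉ nsupport 𝒮)
    (h : Nested E 𝒮') (hsupp : nsupport 𝒮' = insert s (nsupport 𝒮)) (hsub : 𝒮 ⊆ 𝒮') :
    𝒮'.filter (s ∉ ·) = 𝒮 := by
  have h𝒮filter : 𝒮 ⊆ 𝒮'.filter (s ∉ ·) := fun I hI =>
    mem_filter.2 ⟨hsub hI, fun hsI => hs (subset_nsupport hI hsI)⟩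
  refine h𝒮.2 _ (h.subset (filter_subset _ _))
    (Subset.antisymm (fun x hx => ?_) (nsupport_mono h𝒮filter)) h𝒮filter
  obtain ⟨I, hI, hxI⟩ := mem_nsupport.1 hx
  obtain ⟨hI', hsI⟩ := mem_filter.1 hI
  have hxS : x ∈ insert s (nsupport 𝒮) := hsupp ▸ subset_nsupport hI' hxI
  exact (mem_insert.1 hxS).resolve_left fun hxs => hsI (hxs ▸ hxI)

end NestedCollections

theorem stmt1_general (n : ℕ) (E : Fin n → Fin n → Prop)
    (𝒮 : Finset (Finset (Fin n))) (h𝒮 : MaximalNested E 𝒮)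
    (s : Fin n) (hs : s ∉ nsupport 𝒮) :
    MaximalNested E (insert (oplus E (nsupport 𝒮) s) 𝒮) ∧
      nsupport (insert (oplus E (nsupport 𝒮) s) 𝒮) = insert s (nsupport 𝒮) := by
  set K := oplus E (nsupport 𝒮) s
  have hsupp : nsupport (insert K 𝒮) = insert s (nsupport 𝒮) := nsupport_insert_oplus 𝒮 s
  refine ⟨⟨h𝒮.1.insert_scc (subset_insert _ _) (mem_insert_self _ _),
    fun 𝒮' h' hsupp' hsub => ?_⟩, hsupp⟩
  rw [hsupp] at hsupp'
  have h𝒮𝒮' : 𝒮 ⊆ 𝒮' := (subset_insert _ _).trans hsub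
  refine Subset.antisymm (fun J hJ => ?_) hsub
  by_cases hsJ : s ∈ J
  · have hJK : J ⊆ K := (h'.1 J hJ).subset_scc (hsupp' ▸ subset_nsupport hJ) hsJ
    rw [h'.eq_of_mem_of_subset h𝒮𝒮' hs (hsub (mem_insert_self _ _)) scc_subset hJ hsJ hJK]
    exact mem_insert_self _ _
  · rw [← h𝒮.filter_notMem_eq hs h' hsupp' h𝒮𝒮']
    exact mem_insert_of_mem (mem_filter.2 ⟨hJ, hsJ⟩)

/-- Activation: if `𝒮` is a maximal nested collection with support `S` and `s ∉ S`, then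
`μ_s(𝒮) = 𝒮 ∪ {S ⊕ s}` is a maximal nested collection with support `S ∪ {s}`. -/
theorem stmt1 (n : ℕ) (E : Fin n → Fin n → Prop) (hE : ∀ i, ¬ E i i)
    (𝒮 : Finset (Finset (Fin n))) (h𝒮 : MaximalNested E 𝒮)
    (s : Fin n) (hs : s ∉ nsupport 𝒮) :
    MaximalNested E (insert (oplus E (nsupport 𝒮) s) 𝒮) ∧
      nsupport (insert (oplus E (nsupport 𝒮) s) 𝒮) = insert s (nsupport 𝒮) :=
  stmt1_general n E 𝒮 h𝒮 s hs
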